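/- arXiv:1906.10832 — 2 statements merged into one kernel-verified Lean document; each statement's English description precedes it below -/
import Mathlib

section
/- Let {X_i}_{i∈I} be a family of subspaces of a sober space X such that each X_i is well-filtered in the subspace topology. Then ⋂_{i∈I} X_i is well-filtered in the subspace topology. -/
open Set

/-- The specialization order of the paper: `x ≤ y` iff `x ∈ cl {y}`. -/
def specLE {X : Type*} [TopologicalSpace X] (x y : X) : Prop := x ∈ closure ({y} : Set X)

/-- Upward closure `↑A` w.r.t. the specialization order. -/
def upSet {X : Type*} [TopologicalSpace X] (A : Set X) : Set X := {y | ∃ x ∈ A, specLE x y}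

/-- Downward closure `↓A` w.r.t. the specialization order. -/
def downSet {X : Type*} [TopologicalSpace X] (A : Set X) : Set X := {y | ∃ x ∈ A, specLE y x}

/-- The saturation of a set: the intersection of all open sets containing it. -/
def sat {X : Type*} [TopologicalSpace X] (A : Set X) : Set X := ⋂₀ {U | IsOpen U ∧ A ⊆ U}

/-- A `T0` space is well-filtered if for every filtered family `𝓕` of compact saturated
sets and every open `U` with `⋂₀ 𝓕 ⊆ U`, some member of `𝓕` is contained in `U`. -/
def WellFilteredSpace (X : Type*) [TopologicalSpace X] : Prop :=
  ∀ 𝓕 : Set (Set X), 𝓕.Nonempty →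
    (∀ K ∈ 𝓕, IsCompact K ∧ sat K = K) →
    (∀ K₁ ∈ 𝓕, ∀ K₂ ∈ 𝓕, ∃ K₃ ∈ 𝓕, K₃ ⊆ K₁ ∩ K₂) →
    ∀ U : Set X, IsOpen U → ⋂₀ 𝓕 ⊆ U → ∃ K ∈ 𝓕, K ⊆ U

lemma subset_sat' {X : Type*} [TopologicalSpace X] (A : Set X) : A ⊆ sat A :=
  fun x hx => mem_sInter.2 fun _ hU => hU.2 hx

lemma sat_subset' {X : Type*} [TopologicalSpace X] {A U : Set X} (hU : IsOpen U)
    (h : A ⊆ U) : sat A ⊆ U :=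
  fun _ hx => hx U ⟨hU, h⟩

lemma sat_mono' {X : Type*} [TopologicalSpace X] {A B : Set X} (h : A ⊆ B) :
    sat A ⊆ sat B :=
  fun x hx => mem_sInter.2 fun U hU => hx U ⟨hU.1, h.trans hU.2⟩

lemma sat_idem' {X : Type*} [TopologicalSpace X] (A : Set X) : sat (sat A) = sat A := by
  apply subset_antisymm _ (subset_sat' _)
  intro x hx
  exact mem_sInter.2 fun U hU => hx U ⟨hU.1, sat_subset' hU.1 hU.2⟩

lemma isCompact_sat' {X : Type*} [TopologicalSpace X] {A : Set X} (hA : IsCompact A) :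
    IsCompact (sat A) := by
  rw [isCompact_iff_finite_subcover]
  intro ι W hW hcov
  obtain ⟨t, ht⟩ := hA.elim_finite_subcover W hW ((subset_sat' A).trans hcov)
  exact ⟨t, sat_subset' (isOpen_biUnion fun i _ => hW i) ht⟩

lemma exists_closure_of_mem_sat {X : Type*} [TopologicalSpace X] {A : Set X} {y : X}
    (hy : y ∈ sat A) : ∃ a ∈ A, a ∈ closure ({y} : Set X) := by
  by_contra hcon
  push_neg at hcon
  have hsub : A ⊆ (closure ({y} : Set X))ᶜ := fun a ha => hcon a ha
  have := hy _ ⟨isClosed_closure.isOpen_compl, hsub⟩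
  exact this (subset_closure rfl)

theorem stmt13 {X : Type*} [TopologicalSpace X] [T0Space X] [QuasiSober X]
    {ι : Type*} (S : ι → Set X) (h : ∀ i, WellFilteredSpace ↥(S i)) :
    WellFilteredSpace ↥(⋂ i, S i) := by
  intro 𝓕 h𝓕ne h𝓕cs h𝓕dir U hU hsub
  by_contra hcon
  push_neg at hcon
  obtain ⟨V, hVopen, hVeq⟩ := isOpen_induced_iff.mp hU
  -- the family of closed subsets of Vᶜ meeting the image of every member of 𝓕
  set 𝒞 : Set (Set X) :=
    {C | IsClosed C ∧ C ⊆ Vᶜ ∧ ∀ K ∈ 𝓕, ((Subtype.val '' K) ∩ C).Nonempty} with h𝒞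
  have hVc : Vᶜ ∈ 𝒞 := by
    refine ⟨hVopen.isClosed_compl, subset_rfl, fun K hK => ?_⟩
    obtain ⟨k, hk, hkU⟩ := not_subset.mp (fun hKU => (hcon K hK hKU).elim)
    exact ⟨k, ⟨k, hk, rfl⟩, fun hkV => hkU (by rw [← hVeq]; exact hkV)⟩
  have hzorn : ∀ c ⊆ 𝒞, IsChain (· ⊆ ·) c → c.Nonempty → ∃ lb ∈ 𝒞, ∀ s ∈ c, lb ⊆ s := by
    intro c hcS hchain hcne
    refine ⟨⋂₀ c, ⟨isClosed_sInter fun D hD => (hcS hD).1, ?_, ?_⟩,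
      fun s hs => sInter_subset_of_mem hs⟩
    · obtain ⟨D, hD⟩ := hcne
      exact (sInter_subset_of_mem hD).trans (hcS hD).2.1
    · intro K hK
      by_contra hemp
      rw [not_nonempty_iff_eq_empty] at hemp
      have hKcomp : IsCompact (Subtype.val '' K) :=
        ((h𝓕cs K hK).1).image continuous_subtype_val
      have : Nonempty c := hcne.to_subtype
      have hcov : Subtype.val '' K ⊆ ⋃ D : c, (D : Set X)ᶜ := by
        intro k hk
        by_contra hk'
        simp only [mem_iUnion, mem_compl_iff, not_exists, not_not] at hk'
        have : k ∈ (Subtype.val '' K) ∩ ⋂₀ c :=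
          ⟨hk, mem_sInter.2 fun D hD => hk' ⟨D, hD⟩⟩
        rw [hemp] at this
        exact this
      obtain ⟨D, hD⟩ := hKcomp.elim_directed_cover _
        (fun D : c => (hcS D.2).1.isOpen_compl) hcov
        (by
          intro D₁ D₂
          rcases hchain.total D₁.2 D₂.2 with h' | h'
          · exact ⟨D₁, subset_rfl, compl_subset_compl.2 h'⟩
          · exact ⟨D₂, compl_subset_compl.2 h', subset_rfl⟩)
      obtain ⟨a, ha, haD⟩ := (hcS D.2).2.2 K hK
      exact hD ha haD
  obtain ⟨C, -, hC𝒞, hCmin⟩ := zorn_superset_nonempty 𝒞 hzorn Vᶜ hVc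
  obtain ⟨hCclosed, hCV, hCmeets⟩ := hC𝒞
  have hCmin' : ∀ A ∈ 𝒞, A ⊆ C → A = C := fun A hA hAC => subset_antisymm hAC (hCmin hA hAC)
  have hCne : C.Nonempty := by
    obtain ⟨K, hK⟩ := h𝓕ne
    obtain ⟨a, -, ha⟩ := hCmeets K hK
    exact ⟨a, ha⟩
  -- C is irreducible
  have hirr : IsIrreducible C := by
    refine ⟨hCne, fun O₁ O₂ hO₁ hO₂ h₁ h₂ => ?_⟩
    by_contra hemp
    have key : ∀ O : Set X, IsOpen O → (C ∩ O).Nonempty →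
        ∃ K ∈ 𝓕, (Subtype.val '' K) ∩ (C ∩ Oᶜ) = ∅ := by
      intro O hO hCO
      by_contra hcontra
      push_neg at hcontra
      have hmem : C ∩ Oᶜ ∈ 𝒞 :=
        ⟨hCclosed.inter hO.isClosed_compl, inter_subset_left.trans hCV,
          fun K hK => hcontra K hK⟩
      have heq := hCmin' _ hmem inter_subset_left
      obtain ⟨a, haC, haO⟩ := hCO
      rw [← heq] at haC
      exact haC.2 haO
    obtain ⟨K₁, hK₁, hK₁e⟩ := key O₁ hO₁ h₁
    obtain ⟨K₂, hK₂, hK₂e⟩ := key O₂ hO₂ h₂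
    obtain ⟨K₃, hK₃, hK₃sub⟩ := h𝓕dir K₁ hK₁ K₂ hK₂
    obtain ⟨a, haK, haC⟩ := hCmeets K₃ hK₃
    have haK₁ : a ∈ Subtype.val '' K₁ :=
      image_mono (hK₃sub.trans inter_subset_left) haK
    have haK₂ : a ∈ Subtype.val '' K₂ :=
      image_mono (hK₃sub.trans inter_subset_right) haK
    have haO₁ : a ∈ O₁ := by
      by_contra h'
      exact absurd (eq_empty_iff_forall_notMem.mp hK₁e a) (by exact fun hf => hf ⟨haK₁, haC, h'⟩)
    have haO₂ : a ∈ O₂ := by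
      by_contra h'
      exact absurd (eq_empty_iff_forall_notMem.mp hK₂e a) (by exact fun hf => hf ⟨haK₂, haC, h'⟩)
    exact hemp ⟨a, haC, haO₁, haO₂⟩
  obtain ⟨x, hx⟩ := QuasiSober.sober hirr hCclosed
  have hxC : x ∈ C := hx ▸ subset_closure rfl
  -- x belongs to every S i
  have hxSi : ∀ i, x ∈ S i := by
    intro i
    by_contra hxS
    set A : Set (↥(⋂ j, S j)) → Set ↥(S i) :=
      fun K => (Subtype.val : ↥(S i) → X) ⁻¹' ((Subtype.val '' K) ∩ C) with hA
    have hKSi : ∀ K ∈ 𝓕, (Subtype.val '' K) ∩ C ⊆ S i := by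
      intro K hK y hy
      obtain ⟨k, -, rfl⟩ := hy.1
      exact (mem_iInter.mp k.2) i
    have himgA : ∀ K ∈ 𝓕, Subtype.val '' (A K) = (Subtype.val '' K) ∩ C := by
      intro K hK
      rw [hA]
      rw [Subtype.image_preimage_coe]
      exact inter_eq_self_of_subset_right (hKSi K hK)
    set 𝓖 : Set (Set ↥(S i)) := (fun K => sat (A K)) '' 𝓕 with h𝓖
    have h𝓖ne : 𝓖.Nonempty := h𝓕ne.image _
    have h𝓖cs : ∀ G ∈ 𝓖, IsCompact G ∧ sat G = G := by
      rintro G ⟨K, hK, rfl⟩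
      refine ⟨isCompact_sat' ?_, sat_idem' _⟩
      rw [Topology.IsEmbedding.isCompact_iff Topology.IsEmbedding.subtypeVal, himgA K hK]
      exact ((h𝓕cs K hK).1.image continuous_subtype_val).inter_right hCclosed
    have h𝓖dir : ∀ G₁ ∈ 𝓖, ∀ G₂ ∈ 𝓖, ∃ G₃ ∈ 𝓖, G₃ ⊆ G₁ ∩ G₂ := by
      rintro G₁ ⟨K₁, hK₁, rfl⟩ G₂ ⟨K₂, hK₂, rfl⟩
      obtain ⟨K₃, hK₃, hK₃sub⟩ := h𝓕dir K₁ hK₁ K₂ hK₂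
      refine ⟨sat (A K₃), ⟨K₃, hK₃, rfl⟩, subset_inter ?_ ?_⟩
      · exact sat_mono' (preimage_mono (inter_subset_inter_left _
          (image_mono (hK₃sub.trans inter_subset_left))))
      · exact sat_mono' (preimage_mono (inter_subset_inter_left _
          (image_mono (hK₃sub.trans inter_subset_right))))
    have hWopen : IsOpen ((Subtype.val : ↥(S i) → X) ⁻¹' Cᶜ) :=
      hCclosed.isOpen_compl.preimage continuous_subtype_val
    have hsub𝓖 : ⋂₀ 𝓖 ⊆ (Subtype.val : ↥(S i) → X) ⁻¹' Cᶜ := by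
      intro z hz
      have hCz : C ⊆ closure ({(z : X)} : Set X) := by
        have hmem : C ∩ closure ({(z : X)} : Set X) ∈ 𝒞 := by
          refine ⟨hCclosed.inter isClosed_closure, inter_subset_left.trans hCV, ?_⟩
          intro K hK
          have hzK : z ∈ sat (A K) := hz _ ⟨K, hK, rfl⟩
          obtain ⟨a, haA, hacl⟩ := exists_closure_of_mem_sat hzK
          have hacl' : (a : X) ∈ closure ({(z : X)} : Set X) := by
            rw [closure_subtype] at hacl
            rwa [image_singleton] at hacl
          exact ⟨a, haA.1, haA.2, hacl'⟩
        have := hCmin' _ hmem inter_subset_left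
        rw [← this]
        exact inter_subset_right
      have hxz : x ∈ closure ({(z : X)} : Set X) := hCz hxC
      by_contra hzC
      rw [mem_preimage, mem_compl_iff, not_not] at hzC
      have hzx : (z : X) ∈ closure ({x} : Set X) := hx ▸ hzC
      have h1 : closure ({(z : X)} : Set X) ⊆ closure ({x} : Set X) :=
        closure_minimal (singleton_subset_iff.mpr hzx) isClosed_closure
      have h2 : closure ({x} : Set X) ⊆ closure ({(z : X)} : Set X) :=
        closure_minimal (singleton_subset_iff.mpr hxz) isClosed_closure
      have : x = (z : X) := (inseparable_iff_closure_eq.mpr (subset_antisymm h2 h1)).eq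
      exact hxS (this ▸ (z : ↥(S i)).2)
    obtain ⟨G, hG𝓖, hGsub⟩ := h i 𝓖 h𝓖ne h𝓖cs h𝓖dir _ hWopen hsub𝓖
    obtain ⟨K, hK, rfl⟩ := hG𝓖
    obtain ⟨a, haK, haC⟩ := hCmeets K hK
    have haSi : a ∈ S i := hKSi K hK ⟨haK, haC⟩
    have : (⟨a, haSi⟩ : ↥(S i)) ∈ A K := ⟨haK, haC⟩
    have := hGsub (subset_sat' _ this)
    exact this haC
  -- the generic point of C lies in the intersection
  have hxY : x ∈ ⋂ j, S j := mem_iInter.mpr hxSi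
  have hxK : ∀ K ∈ 𝓕, (⟨x, hxY⟩ : ↥(⋂ j, S j)) ∈ K := by
    intro K hK
    rw [← (h𝓕cs K hK).2]
    refine mem_sInter.2 fun O hO => ?_
    obtain ⟨O', hO'open, hO'eq⟩ := isOpen_induced_iff.mp hO.1
    obtain ⟨a', ⟨a, haK, rfl⟩, haC⟩ := hCmeets K hK
    have haO : a ∈ O := hO.2 haK
    have haO' : (a : X) ∈ O' := by rw [← hO'eq] at haO; exact haO
    have hxO' : x ∈ O' := by
      have := hx ▸ haC
      obtain ⟨y, hyO, hy⟩ := mem_closure_iff.mp this O' hO'open haO'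
      rwa [mem_singleton_iff.mp hy] at hyO
    rw [← hO'eq]
    exact hxO'
  have : (⟨x, hxY⟩ : ↥(⋂ j, S j)) ∈ U := hsub (mem_sInter.2 fun K hK => hxK K hK)
  rw [← hVeq] at this
  exact hCV hxC this
end

section
/- Every well-filtered T0 space is a monotone convergence space (d-space): every directed subset D (with respect to the specialization order) has a supremum, and D converges as a net to its supremum. -/
open Set

/-!
The sets `↑d = sat {d}`, `d ∈ D`, form a filtered family of compact saturated sets, each of
which meets the closed set `cl D`. Well-filteredness forces their intersection, the set of
upper bounds of `D`, to meet `cl D` as well; a point `s` of this intersection is the supremum,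
since every upper bound `b` has `cl D ⊆ cl {b}`. Finally `s ∈ cl D`, so every open neighbourhood
of `s` contains some `d ∈ D`, and with it everything above `d`.
-/

section Specialization

variable {X : Type*} [TopologicalSpace X]

lemma sat_eq_nhdsKer (A : Set X) : sat A = nhdsKer A :=
  (nhdsKer_def A).symm

lemma specLE_iff_specializes {x y : X} : specLE x y ↔ y ⤳ x :=
  specializes_iff_mem_closure.symm

lemma specLE_trans {x y z : X} (hxy : specLE x y) (hyz : specLE y z) : specLE x z :=
  specLE_iff_specializes.2 <| (specLE_iff_specializes.1 hyz).trans (specLE_iff_specializes.1 hxy)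

lemma mem_sat_singleton_iff {d y : X} : y ∈ sat ({d} : Set X) ↔ specLE d y := by
  rw [sat_eq_nhdsKer, mem_nhdsKer_singleton, specLE_iff_specializes]

lemma isCompact_sat_singleton (d : X) : IsCompact (sat ({d} : Set X)) :=
  sat_eq_nhdsKer {d} ▸ isCompact_singleton.nhdsKer

lemma sat_sat (A : Set X) : sat (sat A) = sat A := by
  simp only [sat_eq_nhdsKer, nhdsKer_nhdsKer]

lemma IsOpen.mem_of_specLE {U : Set X} (hU : IsOpen U) {x y : X} (hxy : specLE x y)
    (hx : x ∈ U) : y ∈ U :=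
  (specLE_iff_specializes.1 hxy).mem_open hU hx

end Specialization

namespace WellFilteredSpace

variable {X : Type*} [TopologicalSpace X]

lemma sInter_inter_nonempty (hwf : WellFilteredSpace X) {𝓕 : Set (Set X)}
    (hne : 𝓕.Nonempty) (hcs : ∀ K ∈ 𝓕, IsCompact K ∧ sat K = K)
    (hfil : ∀ K₁ ∈ 𝓕, ∀ K₂ ∈ 𝓕, ∃ K₃ ∈ 𝓕, K₃ ⊆ K₁ ∩ K₂) {C : Set X} (hC : IsClosed C)
    (hmeet : ∀ K ∈ 𝓕, (K ∩ C).Nonempty) : (⋂₀ 𝓕 ∩ C).Nonempty := by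
  by_contra h
  obtain ⟨K, hK, hKC⟩ :=
    hwf 𝓕 hne hcs hfil Cᶜ hC.isOpen_compl fun x hx hxC => h ⟨x, hx, hxC⟩
  obtain ⟨x, hxK, hxC⟩ := hmeet K hK
  exact hKC hxK hxC

lemma exists_mem_closure_forall_specLE (hwf : WellFilteredSpace X) {D : Set X}
    (hDne : D.Nonempty) (hdir : DirectedOn specLE D) :
    ∃ s ∈ closure D, ∀ d ∈ D, specLE d s := by
  set 𝓕 : Set (Set X) := (fun d => sat {d}) '' D
  have hcs : ∀ K ∈ 𝓕, IsCompact K ∧ sat K = K := by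
    rintro _ ⟨d, -, rfl⟩
    exact ⟨isCompact_sat_singleton d, sat_sat _⟩
  have hfil : ∀ K₁ ∈ 𝓕, ∀ K₂ ∈ 𝓕, ∃ K₃ ∈ 𝓕, K₃ ⊆ K₁ ∩ K₂ := by
    rintro _ ⟨d₁, hd₁, rfl⟩ _ ⟨d₂, hd₂, rfl⟩
    obtain ⟨d₃, hd₃, h₁₃, h₂₃⟩ := hdir d₁ hd₁ d₂ hd₂
    refine ⟨sat {d₃}, mem_image_of_mem _ hd₃, fun y hy => ?_⟩
    rw [mem_sat_singleton_iff] at hy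
    exact ⟨mem_sat_singleton_iff.2 (specLE_trans h₁₃ hy),
      mem_sat_singleton_iff.2 (specLE_trans h₂₃ hy)⟩
  have hmeet : ∀ K ∈ 𝓕, (K ∩ closure D).Nonempty := by
    rintro _ ⟨d, hd, rfl⟩
    exact ⟨d, mem_sat_singleton_iff.2 (subset_closure rfl), subset_closure hd⟩
  obtain ⟨s, hs, hs_cl⟩ :=
    hwf.sInter_inter_nonempty (hDne.image _) hcs hfil isClosed_closure hmeet
  exact ⟨s, hs_cl, fun d hd => mem_sat_singleton_iff.1 (hs _ (mem_image_of_mem _ hd))⟩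

end WellFilteredSpace

theorem stmt15_general {X : Type*} [TopologicalSpace X]
    (hwf : WellFilteredSpace X) (D : Set X) (hDne : D.Nonempty)
    (hdir : DirectedOn specLE D) :
    ∃ s : X, (∀ d ∈ D, specLE d s) ∧ (∀ b : X, (∀ d ∈ D, specLE d b) → specLE s b) ∧
      (∀ U : Set X, IsOpen U → s ∈ U → ∃ d ∈ D, ∀ d' ∈ D, specLE d d' → d' ∈ U) := by
  obtain ⟨s, hs_cl, hs_ub⟩ := hwf.exists_mem_closure_forall_specLE hDne hdir
  refine ⟨s, hs_ub, fun b hb => closure_minimal hb isClosed_closure hs_cl, fun U hU hsU => ?_⟩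
  obtain ⟨d, hdU, hd⟩ := mem_closure_iff.1 hs_cl U hU hsU
  exact ⟨d, hd, fun d' _ hdd' => hU.mem_of_specLE hdd' hdU⟩

theorem stmt15 {X : Type*} [TopologicalSpace X] [T0Space X]
    (hwf : WellFilteredSpace X) (D : Set X) (hDne : D.Nonempty)
    (hdir : DirectedOn specLE D) :
    ∃ s : X, (∀ d ∈ D, specLE d s) ∧ (∀ b : X, (∀ d ∈ D, specLE d b) → specLE s b) ∧
      (∀ U : Set X, IsOpen U → s ∈ U → ∃ d ∈ D, ∀ d' ∈ D, specLE d d' → d' ∈ U) :=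
  stmt15_general hwf D hDne hdir
end
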